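/- Let O be a Hermitian 2^n × 2^n matrix and let 0 ≤ κ ≤ 2n. Then Tr((O ⊗ O) · Q_κ^1) = (−1)^{⌊κ/2⌋} · binom(2n, κ)^{−1/2} · C_κ(O), where C_κ(O) := i^{κ mod 2} · Tr(P · O_κ · O_{2n−κ}) is the κ-coherence of O, P = Z^{⊗n}, and O_κ := 2^{−n} Σ_{|s|=κ} Tr((c^s)† O) · c^s denotes the orthogonal projection of O onto B_κ. -/

import Mathlib

open Matrix Complex
open scoped Kronecker

noncomputable section

abbrev QIdx (n : ℕ) := Fin n → Fin 2
abbrev NMat (n : ℕ) := Matrix (QIdx n) (QIdx n) ℂ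
abbrev NMat2 (n : ℕ) := Matrix (QIdx n × QIdx n) (QIdx n × QIdx n) ℂ

/-- The 2×2 Pauli X matrix. -/
def σX : Matrix (Fin 2) (Fin 2) ℂ := !![0, 1; 1, 0]
/-- The 2×2 Pauli Y matrix. -/
def σY : Matrix (Fin 2) (Fin 2) ℂ := !![0, -Complex.I; Complex.I, 0]
/-- The 2×2 Pauli Z matrix. -/
def σZ : Matrix (Fin 2) (Fin 2) ℂ := !![1, 0; 0, -1]

/-- Tensor (Kronecker) product of `n` one-qubit matrices, realized on index type `Fin n → Fin 2`. -/
def tensor {n : ℕ} (M : Fin n → Matrix (Fin 2) (Fin 2) ℂ) : NMat n :=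
  Matrix.of fun f g => ∏ i, M i (f i) (g i)

/-- The Jordan–Wigner Majorana operator `c_μ` (0-based index: `c_{2i} = Z^{⊗i} X I…`,
`c_{2i+1} = Z^{⊗i} Y I…`). -/
def majorana (n : ℕ) (μ : Fin (2 * n)) : NMat n :=
  tensor fun j =>
    if (j : ℕ) < (μ : ℕ) / 2 then σZ
    else if (j : ℕ) = (μ : ℕ) / 2 then (if (μ : ℕ) % 2 = 0 then σX else σY)
    else 1

/-- Ordered product `c^s` of the Majorana operators indexed by a subset `s`. -/
def cProd (n : ℕ) (s : Finset (Fin (2 * n))) : NMat n :=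
  ((s.sort (· ≤ ·)).map (majorana n)).prod

/-- The module `B_κ`: the complex span of products of `κ` distinct Majoranas. -/
def Bspace (n κ : ℕ) : Submodule ℂ (NMat n) :=
  Submodule.span ℂ {M | ∃ s : Finset (Fin (2 * n)), s.card = κ ∧ M = cProd n s}

/-- The Pauli string with `Z` on qubit `j` and identity elsewhere. -/
def pauliZ (n : ℕ) (j : Fin n) : NMat n := tensor fun k => if k = j then σZ else 1

/-- The Pauli string with `X` on qubits `j` and `j+1` and identity elsewhere. -/
def pauliXX (n : ℕ) (j : Fin n) : NMat n :=
  tensor fun k => if (k : ℕ) = (j : ℕ) ∨ (k : ℕ) = (j : ℕ) + 1 then σX else 1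

/-- The parity operator `P = Z^{⊗n}`. -/
def parity (n : ℕ) : NMat n := tensor fun _ => σZ

/-- Normalization constant `(d √C(2n,κ))⁻¹` with `d = 2^n`. -/
def Qnorm (n κ : ℕ) : ℂ := ((2 ^ n : ℂ) * ((Real.sqrt (Nat.choose (2 * n) κ) : ℝ) : ℂ))⁻¹

/-- The quadratic symmetry `Q_κ^0 = (d √C(2n,κ))⁻¹ Σ_{|s|=κ} c^s ⊗ c^s`. -/
def Q0 (n κ : ℕ) : NMat2 n :=
  Qnorm n κ • ∑ s ∈ Finset.powersetCard κ (Finset.univ : Finset (Fin (2 * n))),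
    (cProd n s) ⊗ₖ (cProd n s)

/-- The sum of the (1-based) elements of `s`, i.e. `π(s)`. -/
def piSum (n : ℕ) (s : Finset (Fin (2 * n))) : ℕ := ∑ μ ∈ s, ((μ : ℕ) + 1)

/-- The quadratic symmetry
`Q_κ^1 = (d √C(2n,κ))⁻¹ (−i)^n i^{κ mod 2} Σ_{|s|=κ} (−1)^{π(s)} c^s ⊗ c^{s̄}`. -/
def Q1 (n κ : ℕ) : NMat2 n :=
  (Qnorm n κ * (-Complex.I) ^ n * Complex.I ^ (κ % 2)) •
    ∑ s ∈ Finset.powersetCard κ (Finset.univ : Finset (Fin (2 * n))),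
      ((-1 : ℂ)) ^ (piSum n s) • ((cProd n s) ⊗ₖ (cProd n sᶜ))

/-- The matchgate circuit generators `{Z_j} ∪ {X_j X_{j+1}}`. -/
def matchgateGens (n : ℕ) : Set (NMat n) :=
  {M | ∃ j : Fin n, M = pauliZ n j} ∪
  {M | ∃ j : Fin n, (j : ℕ) + 1 < n ∧ M = pauliXX n j}

/-- The two-copy representation `H ⊗ I + I ⊗ H` of a generator `H`. -/
def bigH (n : ℕ) (H : NMat n) : NMat2 n :=
  H ⊗ₖ (1 : NMat n) + (1 : NMat n) ⊗ₖ H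

/-- Orthogonal projection of `M` onto the module `B_κ`:
`M_κ = 2^{−n} Σ_{|s|=κ} Tr((c^s)† M) c^s`. -/
def projB (n κ : ℕ) (M : NMat n) : NMat n :=
  (2 ^ n : ℂ)⁻¹ • ∑ s ∈ Finset.powersetCard κ (Finset.univ : Finset (Fin (2 * n))),
    Matrix.trace ((cProd n s)ᴴ * M) • cProd n s

/-- The `κ`-coherence `C_κ(M) = i^{κ mod 2} Tr(P M_κ M_{2n−κ})`. -/
def coherence (n κ : ℕ) (M : NMat n) : ℂ :=
  Complex.I ^ (κ % 2) * Matrix.trace (parity n * projB n κ M * projB n (2 * n - κ) M)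

/-!
Everything follows from the Majorana relations `c_μ² = 1`, `c_μ c_ν = -c_ν c_μ` for `μ ≠ ν` and
`P c_μ = -c_μ P`. After expanding both projections in the coherence, `Tr (P c^s c^t)` vanishes
unless `t = sᶜ`: otherwise some `c_μ` anticommutes with `P c^s c^t` (as `|s| + |t|` is even),
which forces its trace to be zero. For `t = sᶜ`, reordering `c^s c^{sᶜ}` into `c_0 ⋯ c_{2n-1} = i^n P`
costs the sign `(-1)^(Σ s + C(|s|, 2))` (indices counted from 0), and `(c^s)† = (-1)^C(|s|, 2) c^s`
turns the coefficients `Tr ((c^s)† O)` into `Tr (O c^s)`. Both sides thus become multiples of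
`Σ_s (-1)^(Σ s) Tr (O c^s) Tr (O c^{sᶜ})`, and the two scalars agree because
`C(m, 2) ≡ ⌊m / 2⌋ (mod 2)`.
-/

lemma add_one_choose_two (m : ℕ) : (m + 1).choose 2 = m.choose 2 + m := by
  rw [Nat.choose_succ_succ, Nat.choose_one_right, add_comm]

lemma neg_one_pow_choose_two {R : Type*} [Monoid R] [HasDistribNeg R] (m : ℕ) :
    (-1 : R) ^ m.choose 2 = (-1) ^ (m / 2) := by
  induction m using Nat.twoStepInduction with
  | zero => simp
  | one => simp
  | more m ih _ =>
    have hchoose : (m + 2).choose 2 = m.choose 2 + 2 * m + 1 := by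
      rw [add_one_choose_two, add_one_choose_two]
      ring
    rw [hchoose, pow_succ, pow_add, pow_mul, neg_one_sq, one_pow, mul_one, ih,
      show (m + 2) / 2 = m / 2 + 1 by omega, pow_succ]

lemma trace_eq_zero_of_anticommute {m R : Type*} [Fintype m] [DecidableEq m] [CommRing R]
    [IsAddTorsionFree R] {A M : Matrix m m R} (hA : A * A = 1) (h : A * M = -(M * A)) :
    trace M = 0 := by
  refine self_eq_neg.mp ?_
  calc trace M = trace (A * M * A) := by rw [trace_mul_comm, ← mul_assoc, hA, one_mul]
    _ = -trace M := by rw [h, neg_mul, trace_neg, mul_assoc, hA, mul_one]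

lemma trace_mul_smul_sum_mul_smul_sum {m ι ι' R : Type*} [Fintype m] [CommSemiring R]
    (A : Matrix m m R) (c d : R) (F : Finset ι) (G : Finset ι') (a : ι → R) (b : ι' → R)
    (X : ι → Matrix m m R) (Y : ι' → Matrix m m R) :
    trace (A * (c • ∑ s ∈ F, a s • X s) * (d • ∑ t ∈ G, b t • Y t)) =
      c * d * ∑ s ∈ F, ∑ t ∈ G, a s * b t * trace (A * X s * Y t) := by
  simp only [Matrix.mul_smul, Matrix.smul_mul, Matrix.sum_mul, trace_sum,
    trace_smul, smul_eq_mul, Finset.mul_sum]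
  rw [Finset.sum_comm]
  refine Finset.sum_congr rfl fun s _ => Finset.sum_congr rfl fun t _ => ?_
  ring

section Tensor

variable {n : ℕ}

lemma tensor_mul (A B : Fin n → Matrix (Fin 2) (Fin 2) ℂ) :
    tensor A * tensor B = tensor fun j => A j * B j := by
  ext f g
  simp only [tensor, mul_apply, of_apply]
  rw [Fintype.prod_sum fun j x => A j (f j) x * B j x (g j)]
  exact Finset.sum_congr rfl fun x _ => Finset.prod_mul_distrib.symm

lemma tensor_one : tensor (fun _ => 1 : Fin n → Matrix (Fin 2) (Fin 2) ℂ) = 1 := by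
  ext f g
  simp [tensor, one_apply, Finset.prod_boole, funext_iff]

lemma tensor_smul (d : Fin n → ℂ) (A : Fin n → Matrix (Fin 2) (Fin 2) ℂ) :
    tensor (fun j => d j • A j) = (∏ j, d j) • tensor A := by
  ext f g
  simp [tensor, Finset.prod_mul_distrib]

lemma conjTranspose_tensor (A : Fin n → Matrix (Fin 2) (Fin 2) ℂ) :
    (tensor A)ᴴ = tensor fun j => (A j)ᴴ := by
  ext f g
  simp [tensor]

lemma tensor_mul_tensor_of_anticommute_at (A B : Fin n → Matrix (Fin 2) (Fin 2) ℂ) (j₀ : Fin n)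
    (h₀ : A j₀ * B j₀ = -(B j₀ * A j₀)) (h : ∀ j ≠ j₀, A j * B j = B j * A j) :
    tensor A * tensor B = -(tensor B * tensor A) := by
  have hfac : (fun j => A j * B j) = fun j => (if j = j₀ then -1 else 1 : ℂ) • (B j * A j) := by
    funext j
    split_ifs with hj
    · subst hj; simp [h₀]
    · simp [h j hj]
  rw [tensor_mul, tensor_mul, hfac, tensor_smul, Fintype.prod_ite_eq', neg_one_smul]

end Tensor

section Pauli

lemma σX_mul_self : σX * σX = 1 := by
  ext i j; fin_cases i <;> fin_cases j <;> simp [σX]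

lemma σY_mul_self : σY * σY = 1 := by
  ext i j; fin_cases i <;> fin_cases j <;> simp [σY]

lemma σZ_mul_self : σZ * σZ = 1 := by
  ext i j; fin_cases i <;> fin_cases j <;> simp [σZ]

lemma σX_conjTranspose : σXᴴ = σX := by
  ext i j; fin_cases i <;> fin_cases j <;> simp [σX]

lemma σY_conjTranspose : σYᴴ = σY := by
  ext i j; fin_cases i <;> fin_cases j <;> simp [σY]

lemma σZ_conjTranspose : σZᴴ = σZ := by
  ext i j; fin_cases i <;> fin_cases j <;> simp [σZ]

end Pauli

section Majorana

variable {n : ℕ}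

lemma majorana_mul_self (μ : Fin (2 * n)) : majorana n μ * majorana n μ = 1 := by
  rw [majorana, tensor_mul, ← tensor_one]
  congr 1; funext j
  split_ifs <;> simp [σX_mul_self, σY_mul_self, σZ_mul_self]

lemma majorana_conjTranspose (μ : Fin (2 * n)) : (majorana n μ)ᴴ = majorana n μ := by
  rw [majorana, conjTranspose_tensor]
  congr 1; funext j
  split_ifs <;> simp [σX_conjTranspose, σY_conjTranspose, σZ_conjTranspose]

lemma majorana_anticommute_of_lt {μ ν : Fin (2 * n)} (h : μ < ν) :
    majorana n μ * majorana n ν = -(majorana n ν * majorana n μ) := by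
  have hμ : (μ : ℕ) < 2 * n := μ.isLt
  have hlt : (μ : ℕ) < ν := h
  refine tensor_mul_tensor_of_anticommute_at _ _ ⟨μ / 2, by omega⟩ ?_ fun j hj => ?_
  · dsimp only
    split_ifs <;> first
      | omega
      | (ext a b; fin_cases a <;> fin_cases b <;> simp [σX, σY, σZ])
  · have hj' : (j : ℕ) ≠ μ / 2 := fun h' => hj (Fin.ext h')
    split_ifs <;> first | omega | simp

lemma majorana_anticommute {μ ν : Fin (2 * n)} (h : μ ≠ ν) :
    majorana n μ * majorana n ν = -(majorana n ν * majorana n μ) := by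
  rcases h.lt_or_gt with h | h
  · exact majorana_anticommute_of_lt h
  · rw [majorana_anticommute_of_lt h, neg_neg]

lemma parity_anticommute_majorana (μ : Fin (2 * n)) :
    parity n * majorana n μ = -(majorana n μ * parity n) := by
  have hμ : (μ : ℕ) < 2 * n := μ.isLt
  refine tensor_mul_tensor_of_anticommute_at _ _ ⟨μ / 2, by omega⟩ ?_ fun j hj => ?_
  · dsimp only
    split_ifs <;> first
      | omega
      | (ext a b; fin_cases a <;> fin_cases b <;> simp [σX, σY, σZ])
  · have hj' : (j : ℕ) ≠ μ / 2 := fun h' => hj (Fin.ext h')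
    split_ifs <;> first | omega | simp

lemma parity_mul_self : parity n * parity n = 1 := by
  rw [parity, tensor_mul, σZ_mul_self, tensor_one]

end Majorana

section CProd

variable {n : ℕ}

lemma cProd_empty : cProd n ∅ = 1 := by
  simp [cProd]

lemma cProd_insert_of_lt {μ : Fin (2 * n)} {s : Finset (Fin (2 * n))} (h : ∀ x ∈ s, μ < x) :
    cProd n (insert μ s) = majorana n μ * cProd n s := by
  rw [cProd, Finset.sort_insert _ (fun x hx => (h x hx).le) fun hμ => lt_irrefl μ (h μ hμ)]
  rfl

lemma majorana_mul_cProd (μ : Fin (2 * n)) (s : Finset (Fin (2 * n))) :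
    majorana n μ * cProd n s = (-1 : ℂ) ^ (s.erase μ).card • (cProd n s * majorana n μ) := by
  induction s using Finset.induction_on_min with
  | empty => simp [cProd_empty]
  | insert ν s hν ih =>
    have hνs : ν ∉ s := fun h => lt_irrefl ν (hν ν h)
    rw [cProd_insert_of_lt hν]
    by_cases hμν : μ = ν
    · subst hμν
      conv_lhs => rw [ih]
      rw [Finset.erase_insert hνs, Finset.erase_eq_of_notMem hνs, mul_smul_comm, mul_assoc]
    · rw [Finset.erase_insert_of_ne (Ne.symm hμν),
        Finset.card_insert_of_notMem fun h => hνs (Finset.mem_of_mem_erase h), ← mul_assoc,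
        majorana_anticommute hμν, neg_mul, mul_assoc, ih, mul_smul_comm, pow_succ, mul_neg_one,
        neg_smul, mul_assoc]

lemma cProd_insert {μ : Fin (2 * n)} {s : Finset (Fin (2 * n))} (hμ : μ ∉ s) :
    cProd n (insert μ s) = (-1 : ℂ) ^ (s.filter (· < μ)).card • (majorana n μ * cProd n s) := by
  induction s using Finset.induction_on_min with
  | empty => simp [cProd]
  | insert ν s hν ih =>
    have hνs : ν ∉ s := fun h => lt_irrefl ν (hν ν h)
    obtain ⟨hμν, hμs⟩ : μ ≠ ν ∧ μ ∉ s := by simpa using hμ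
    rcases hμν.lt_or_gt with hlt | hgt
    · have hmin : ∀ x ∈ insert ν s, μ < x := by
        simpa [hlt] using fun x hx => hlt.trans (hν x hx)
      rw [cProd_insert_of_lt hmin, Finset.filter_false_of_mem fun x hx => (hmin x hx).asymm]
      simp
    · have hmin : ∀ x ∈ insert μ s, ν < x := by simpa [hgt] using hν
      rw [Finset.insert_comm, cProd_insert_of_lt hmin, ih hμs, cProd_insert_of_lt hν,
        Finset.filter_insert, if_pos hgt,
        Finset.card_insert_of_notMem fun h => hνs (Finset.mem_of_mem_filter _ h), mul_smul_comm,
        ← mul_assoc, ← mul_assoc, majorana_anticommute hμν.symm, neg_mul, pow_succ, mul_neg_one,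
        neg_smul, smul_neg]

lemma cProd_insert_of_gt {μ : Fin (2 * n)} {s : Finset (Fin (2 * n))} (h : ∀ x ∈ s, x < μ) :
    cProd n (insert μ s) = cProd n s * majorana n μ := by
  have hμ : μ ∉ s := fun hμ => lt_irrefl μ (h μ hμ)
  rw [cProd_insert hμ, Finset.filter_true_of_mem h, majorana_mul_cProd,
    Finset.erase_eq_of_notMem hμ, smul_smul, ← pow_add, Even.neg_one_pow ⟨_, rfl⟩, one_smul]

lemma cProd_conjTranspose (s : Finset (Fin (2 * n))) :
    (cProd n s)ᴴ = (-1 : ℂ) ^ s.card.choose 2 • cProd n s := by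
  induction s using Finset.induction_on_max with
  | empty => simp [cProd_empty]
  | insert μ s hμ ih =>
    have hμs : μ ∉ s := fun h => lt_irrefl μ (hμ μ h)
    rw [cProd_insert_of_gt hμ, conjTranspose_mul, majorana_conjTranspose, ih, mul_smul_comm,
      majorana_mul_cProd, Finset.erase_eq_of_notMem hμs, smul_smul, ← pow_add,
      Finset.card_insert_of_notMem hμs, Nat.choose_succ_succ, Nat.choose_one_right, add_comm]

lemma card_filter_compl_insert_lt {μ : Fin (2 * n)} {s : Finset (Fin (2 * n))}
    (h : ∀ x ∈ s, x < μ) : ((insert μ s)ᶜ.filter (· < μ)).card + s.card = μ := by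
  have hsplit : Finset.Iio μ = (insert μ s)ᶜ.filter (· < μ) ∪ s := by
    ext x
    simp only [Finset.mem_Iio, Finset.mem_union, Finset.mem_filter, Finset.mem_compl,
      Finset.mem_insert]
    grind
  rw [← Fin.card_Iio, hsplit, Finset.card_union_of_disjoint]
  exact Finset.disjoint_left.mpr fun x hx hxs => (Finset.mem_compl.mp (Finset.mem_filter.mp hx).1)
    (Finset.mem_insert_of_mem hxs)

lemma cProd_mul_cProd_compl (s : Finset (Fin (2 * n))) :
    cProd n s * cProd n sᶜ =
      (-1 : ℂ) ^ (∑ x ∈ s, (x : ℕ) + s.card.choose 2) • cProd n Finset.univ := by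
  induction s using Finset.induction_on_max with
  | empty => simp [cProd_empty]
  | insert μ s hμ ih =>
    have hμs : μ ∉ s := fun h => lt_irrefl μ (hμ μ h)
    set a := ((insert μ s)ᶜ.filter (· < μ)).card
    have hcompl : sᶜ = insert μ (insert μ s)ᶜ := by
      ext x; by_cases hx : x = μ <;> simp [hx, hμs]
    have hstep : cProd n s * cProd n sᶜ =
        (-1 : ℂ) ^ a • (cProd n (insert μ s) * cProd n (insert μ s)ᶜ) := by
      rw [hcompl, cProd_insert (by simp), cProd_insert_of_gt hμ, mul_smul_comm, mul_assoc]
    have hexp : ∑ x ∈ insert μ s, (x : ℕ) + (insert μ s).card.choose 2 =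
        a + (∑ x ∈ s, (x : ℕ) + s.card.choose 2) + 2 * s.card := by
      have := card_filter_compl_insert_lt hμ
      rw [Finset.sum_insert hμs, Finset.card_insert_of_notMem hμs, add_one_choose_two]
      omega
    have hY : cProd n (insert μ s) * cProd n (insert μ s)ᶜ =
        (-1 : ℂ) ^ a • ((-1 : ℂ) ^ (∑ x ∈ s, (x : ℕ) + s.card.choose 2) • cProd n Finset.univ) := by
      rw [← ih, hstep, smul_smul, ← pow_add, Even.neg_one_pow ⟨a, rfl⟩, one_smul]
    rw [hY, smul_smul, ← pow_add, hexp, pow_add _ _ (2 * s.card), pow_mul, neg_one_sq, one_pow,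
      mul_one]

lemma cProd_filter_lt_two_mul {k : ℕ} (hk : k ≤ n) :
    cProd n (Finset.univ.filter fun μ : Fin (2 * n) => (μ : ℕ) < 2 * k) =
      I ^ k • tensor fun j : Fin n => if (j : ℕ) < k then σZ else 1 := by
  induction k with
  | zero => simp [cProd_empty, tensor_one]
  | succ k ih =>
    let μ₀ : Fin (2 * n) := ⟨2 * k, by omega⟩
    let μ₁ : Fin (2 * n) := ⟨2 * k + 1, by omega⟩
    have hsplit : (Finset.univ.filter fun μ : Fin (2 * n) => (μ : ℕ) < 2 * (k + 1)) =
        insert μ₁ (insert μ₀ (Finset.univ.filter fun μ : Fin (2 * n) => (μ : ℕ) < 2 * k)) := by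
      ext x
      simp only [Finset.mem_filter, Finset.mem_univ, true_and, Finset.mem_insert, Fin.ext_iff,
        μ₀, μ₁]
      omega
    rw [hsplit, cProd_insert_of_gt (by simp [Fin.lt_def, μ₀, μ₁]; omega),
      cProd_insert_of_gt (by simp [Fin.lt_def, μ₀]), ih (by omega), smul_mul_assoc,
      smul_mul_assoc, majorana, majorana, tensor_mul, tensor_mul, pow_succ, mul_smul,
      ← Fintype.prod_ite_eq' (⟨k, by omega⟩ : Fin n) fun _ => I, ← tensor_smul]
    -- the new pair contributes `c_{2k} c_{2k+1} = i Z_k`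
    congr 2
    funext j
    simp only [μ₀, μ₁, Fin.ext_iff]
    split_ifs <;> first
      | omega
      | (ext a b; fin_cases a <;> fin_cases b <;> simp [σX, σY, σZ])

lemma cProd_univ : cProd n Finset.univ = I ^ n • parity n := by
  simpa [parity] using cProd_filter_lt_two_mul (n := n) le_rfl

end CProd

section Trace

variable {n : ℕ}

lemma trace_conjTranspose_cProd_mul (s : Finset (Fin (2 * n))) (M : NMat n) :
    trace ((cProd n s)ᴴ * M) = (-1) ^ s.card.choose 2 * trace (M * cProd n s) := by
  rw [cProd_conjTranspose, smul_mul_assoc, trace_smul, smul_eq_mul, trace_mul_comm]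

lemma trace_parity_mul_cProd_mul_cProd_eq_zero {s t : Finset (Fin (2 * n))}
    (hst : Even (s.card + t.card)) (hne : t ≠ sᶜ) :
    trace (parity n * cProd n s * cProd n t) = 0 := by
  obtain ⟨μ, hμ⟩ : ∃ μ, μ ∈ s ↔ μ ∈ t := by
    by_contra! h
    exact hne (Finset.ext fun μ => by have := h μ; rw [Finset.mem_compl]; tauto)
  have hsign : Even ((s.erase μ).card + (t.erase μ).card) := by
    by_cases hs : μ ∈ s
    · have ht := hμ.mp hs
      have hs_pos := Finset.card_pos.mpr ⟨μ, hs⟩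
      have ht_pos := Finset.card_pos.mpr ⟨μ, ht⟩
      rw [Finset.card_erase_of_mem hs, Finset.card_erase_of_mem ht, Nat.even_iff]
      rw [Nat.even_iff] at hst
      omega
    · rwa [Finset.erase_eq_of_notMem hs, Finset.erase_eq_of_notMem (mt hμ.mpr hs)]
  refine trace_eq_zero_of_anticommute (majorana_mul_self μ) ?_
  have hP : majorana n μ * parity n = -(parity n * majorana n μ) := by
    rw [parity_anticommute_majorana, neg_neg]
  rw [← mul_assoc, ← mul_assoc, hP, neg_mul, neg_mul, mul_assoc _ (majorana n μ),
    majorana_mul_cProd]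
  simp only [smul_mul_assoc, mul_smul_comm, mul_assoc]
  rw [majorana_mul_cProd]
  simp only [mul_smul_comm, smul_smul, ← pow_add, hsign.neg_one_pow, one_smul]

lemma trace_parity_mul_cProd_mul_cProd_compl (s : Finset (Fin (2 * n))) :
    trace (parity n * cProd n s * cProd n sᶜ) =
      (-1) ^ (∑ x ∈ s, (x : ℕ) + s.card.choose 2) * (2 * I) ^ n := by
  rw [mul_assoc, cProd_mul_cProd_compl, cProd_univ, mul_smul_comm, mul_smul_comm,
    parity_mul_self, trace_smul, trace_smul, trace_one]
  simp [mul_pow, mul_comm]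

end Trace

def complementPairing (n κ : ℕ) (M : NMat n) : ℂ :=
  ∑ s ∈ Finset.powersetCard κ (Finset.univ : Finset (Fin (2 * n))),
    (-1) ^ (∑ x ∈ s, (x : ℕ)) * (trace (M * cProd n s) * trace (M * cProd n sᶜ))

section Pairing

variable {n : ℕ}

lemma trace_kronecker_mul_Q1 (M : NMat n) (κ : ℕ) :
    trace ((M ⊗ₖ M) * Q1 n κ) =
      Qnorm n κ * (-I) ^ n * I ^ (κ % 2) * (-1) ^ κ * complementPairing n κ M := by
  rw [Q1, Matrix.mul_smul, trace_smul, smul_eq_mul, Matrix.mul_sum, trace_sum, complementPairing,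
    Finset.mul_sum, Finset.mul_sum]
  refine Finset.sum_congr rfl fun s hs => ?_
  rw [Matrix.mul_smul, trace_smul, smul_eq_mul, ← mul_kronecker_mul, trace_kronecker, piSum,
    Finset.sum_add_distrib, Finset.sum_const, smul_eq_mul, mul_one,
    (Finset.mem_powersetCard_univ.mp hs), pow_add]
  ring

lemma coherence_eq (M : NMat n) {κ : ℕ} (hκ : κ ≤ 2 * n) :
    coherence n κ M = I ^ (κ % 2) * ((2 : ℂ) ^ n)⁻¹ * I ^ n * (-1) ^ (2 * n - κ).choose 2 *
      complementPairing n κ M := by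
  have hdiag : ∀ s ∈ Finset.powersetCard κ (Finset.univ : Finset (Fin (2 * n))),
      ∑ t ∈ Finset.powersetCard (2 * n - κ) Finset.univ,
        trace ((cProd n s)ᴴ * M) * trace ((cProd n t)ᴴ * M) *
          trace (parity n * cProd n s * cProd n t) =
      2 ^ n * I ^ n * (-1) ^ (2 * n - κ).choose 2 *
        ((-1) ^ (∑ x ∈ s, (x : ℕ)) * (trace (M * cProd n s) * trace (M * cProd n sᶜ))) := by
    intro s hs
    have hcard : s.card = κ := Finset.mem_powersetCard_univ.mp hs
    have hcompl : sᶜ.card = 2 * n - κ := by rw [Finset.card_compl, Fintype.card_fin, hcard]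
    rw [Finset.sum_eq_single_of_mem sᶜ (Finset.mem_powersetCard_univ.mpr hcompl) fun t ht hts => by
      rw [trace_parity_mul_cProd_mul_cProd_eq_zero _ hts, mul_zero]
      rw [hcard, Finset.mem_powersetCard_univ.mp ht]
      exact ⟨n, by omega⟩]
    rw [trace_conjTranspose_cProd_mul, trace_conjTranspose_cProd_mul,
      trace_parity_mul_cProd_mul_cProd_compl, hcompl, hcard, pow_add, mul_pow]
    have hsq : ((-1 : ℂ) ^ κ.choose 2) ^ 2 = 1 := by rw [← pow_mul, pow_mul', neg_one_sq, one_pow]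
    linear_combination (2 ^ n * I ^ n * (-1) ^ (2 * n - κ).choose 2 * (-1) ^ (∑ x ∈ s, (x : ℕ)) *
      (trace (M * cProd n s) * trace (M * cProd n sᶜ))) * hsq
  rw [coherence, projB, projB, trace_mul_smul_sum_mul_smul_sum, Finset.sum_congr rfl hdiag,
    complementPairing, Finset.mul_sum, Finset.mul_sum, Finset.mul_sum]
  refine Finset.sum_congr rfl fun s _ => ?_
  field_simp

end Pairing

theorem trace_OO_Q1_general (n : ℕ) (κ : ℕ) (hκ : κ ≤ 2 * n)
    (O : NMat n) :
    Matrix.trace ((O ⊗ₖ O) * Q1 n κ) =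
      ((-1 : ℂ)) ^ (κ / 2) * (((Real.sqrt (Nat.choose (2 * n) κ) : ℝ) : ℂ))⁻¹ *
        coherence n κ O := by
  have hsign : (-1 : ℂ) ^ n * (-1) ^ κ = (-1) ^ (κ / 2) * (-1) ^ (2 * n - κ).choose 2 := by
    have hpar : (n + κ) % 2 = (κ / 2 + (2 * n - κ) / 2) % 2 := by
      rcases Nat.even_or_odd κ with ⟨a, rfl⟩ | ⟨a, rfl⟩ <;> omega
    rw [neg_one_pow_choose_two, ← pow_add, ← pow_add, neg_one_pow_eq_pow_mod_two, hpar,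
      ← neg_one_pow_eq_pow_mod_two]
  rw [trace_kronecker_mul_Q1, coherence_eq O hκ, Qnorm, mul_inv, neg_pow]
  linear_combination ((2 : ℂ) ^ n)⁻¹ * (((Real.sqrt (Nat.choose (2 * n) κ) : ℝ) : ℂ))⁻¹ *
    I ^ n * I ^ (κ % 2) * complementPairing n κ O * hsign

/-- For Hermitian `O`: `Tr((O ⊗ O) Q_κ^1) = (−1)^{⌊κ/2⌋} C(2n,κ)^{−1/2} C_κ(O)`. -/
theorem trace_OO_Q1 (n : ℕ) (hn : 1 ≤ n) (κ : ℕ) (hκ : κ ≤ 2 * n)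
    (O : NMat n) (hO : O.IsHermitian) :
    Matrix.trace ((O ⊗ₖ O) * Q1 n κ) =
      ((-1 : ℂ)) ^ (κ / 2) * (((Real.sqrt (Nat.choose (2 * n) κ) : ℝ) : ℂ))⁻¹ *
        coherence n κ O :=
  trace_OO_Q1_general n κ hκ O

end
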